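/- arXiv:2204.04548 — 3 statements merged into one kernel-verified Lean document; each statement's English description precedes it below -/
import Mathlib

section
/- Let N ≥ 1 be an integer and 0 ≤ α < N, and set γ = 2N + 2 − 2α (so γ > 2) and p defined by 1/p = 1/2 − 1/γ. Then there exists a constant M₀ > 0 depending only on γ such that for every r > 0 and every nonnegative function h ∈ C¹([0,2r]) with h(2r) = 0, one has (∫₀^{2r} h(s)^p s^{γ-1} ds)^{1/p} ≤ M₀ (∫₀^{2r} |h'(s)|² s^{γ-1} ds)^{1/2}. -/
open MeasureTheory Set

/-!
Write `D = ∫ h'² s^(γ-1)` and `X = ∫ h^p s^(γ-1)` over `(0, b)`, where `h(b) = 0`.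

* Writing `h(s) = -∫_s^b h'` and applying Cauchy–Schwarz against the weight `s^(γ-1)` gives the
  pointwise decay `h(s)² s^(γ-2) ≤ D / (γ-2)`.
* Integrating by parts against `(s^γ)' = γ s^(γ-1)` gives `γ X = -p ∫ h' h^(p-1) s^γ`, hence
  by Cauchy–Schwarz `(γ X)² ≤ p² D ∫ (h^(p-1) s)² s^(γ-1)`.
* The exponent `p = 2γ/(γ-2)` is exactly the one with `(p-2)(γ-2) = 4`, for which
  `(h^(p-1) s)² = (h² s^(γ-2))^((p-2)/2) h^p`; the decay bound then controls the last integral by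
  `(D/(γ-2))^((p-2)/2) X`.

Dividing by `X` leaves `X ≤ (p/γ)² (γ-2)^(-(p-2)/2) D^(p/2)`.
-/

theorem sq_integral_mul_le_integral_sq_mul_integral_sq {α : Type*} [MeasurableSpace α]
    {μ : Measure α} {f g : α → ℝ} (hf : MemLp f 2 μ) (hg : MemLp g 2 μ) :
    (∫ x, f x * g x ∂μ) ^ 2 ≤ (∫ x, f x ^ 2 ∂μ) * ∫ x, g x ^ 2 ∂μ := by
  have holder := integral_mul_norm_le_Lp_mul_Lq Real.HolderConjugate.two_two
    (by simpa using hf) (by simpa using hg)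
  simp only [Real.norm_eq_abs, Real.rpow_two, sq_abs, ← Real.sqrt_eq_rpow] at holder
  calc (∫ x, f x * g x ∂μ) ^ 2 ≤ (∫ x, |f x| * |g x| ∂μ) ^ 2 := by
        rw [← sq_abs]
        gcongr
        simpa only [abs_mul] using abs_integral_le_integral_abs (f := fun x ↦ f x * g x)
    _ ≤ (√(∫ x, f x ^ 2 ∂μ) * √(∫ x, g x ^ 2 ∂μ)) ^ 2 :=
        pow_le_pow_left₀ (integral_nonneg fun x ↦ by positivity) holder 2
    _ = _ := by
        rw [mul_pow, Real.sq_sqrt (integral_nonneg fun x ↦ sq_nonneg _),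
          Real.sq_sqrt (integral_nonneg fun x ↦ sq_nonneg _)]

theorem sq_intervalIntegral_mul_mul_le {a b : ℝ} {u v w : ℝ → ℝ} (hab : a ≤ b)
    (hu : ContinuousOn u (Icc a b)) (hv : ContinuousOn v (Icc a b))
    (hw : ContinuousOn w (Icc a b)) (hw0 : ∀ x ∈ Icc a b, 0 ≤ w x) :
    (∫ x in a..b, u x * v x * w x) ^ 2 ≤
      (∫ x in a..b, u x ^ 2 * w x) * ∫ x in a..b, v x ^ 2 * w x := by
  have memLp : ∀ f : ℝ → ℝ, ContinuousOn f (Icc a b) →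
      MemLp (fun x ↦ f x * √(w x)) 2 (volume.restrict (Ioc a b)) := fun f hf ↦ by
    have hfw : ContinuousOn (fun x ↦ f x * √(w x)) (Icc a b) := hf.mul hw.sqrt
    exact (memLp_two_iff_integrable_sq
      ((hfw.mono Ioc_subset_Icc_self).aestronglyMeasurable measurableSet_Ioc)).2
      ((hfw.pow 2).integrableOn_Icc.mono_set Ioc_subset_Icc_self)
  have sq_sqrt : ∀ f : ℝ → ℝ, ∀ x ∈ Ioc a b, (f x * √(w x)) ^ 2 = f x ^ 2 * w x :=
    fun f x hx ↦ by rw [mul_pow, Real.sq_sqrt (hw0 x (Ioc_subset_Icc_self hx))]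
  simp only [intervalIntegral.integral_of_le hab]
  have key := sq_integral_mul_le_integral_sq_mul_integral_sq (memLp u hu) (memLp v hv)
  rwa [setIntegral_congr_fun measurableSet_Ioc (sq_sqrt u),
    setIntegral_congr_fun measurableSet_Ioc (sq_sqrt v),
    setIntegral_congr_fun measurableSet_Ioc fun x hx ↦ ?_] at key
  rw [mul_mul_mul_comm, Real.mul_self_sqrt (hw0 x (Ioc_subset_Icc_self hx))]

theorem intervalIntegral_rpow_le_of_lt_neg_one {q s b : ℝ} (hq : q < -1) (hs : 0 < s)
    (hsb : s ≤ b) : ∫ x in s..b, x ^ q ≤ -s ^ (q + 1) / (q + 1) := by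
  rw [integral_rpow (Or.inr ⟨hq.ne, by rw [uIcc_of_le hsb]; exact fun h0 ↦ hs.not_ge h0.1⟩)]
  refine div_le_div_of_nonpos_of_le (by linarith) ?_
  linarith [Real.rpow_nonneg (hs.le.trans hsb) (q + 1)]

theorem lintegral_Ioo_ofReal_eq_ofReal_intervalIntegral {f : ℝ → ℝ} {a b : ℝ}
    (hab : a ≤ b) (hf : ContinuousOn f (Icc a b)) (hf0 : ∀ x ∈ Ioo a b, 0 ≤ f x) :
    ∫⁻ x in Ioo a b, ENNReal.ofReal (f x) = ENNReal.ofReal (∫ x in a..b, f x) := by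
  rw [intervalIntegral.integral_of_le hab, integral_Ioc_eq_integral_Ioo,
    ofReal_integral_eq_lintegral_ofReal (hf.integrableOn_Icc.mono_set Ioo_subset_Icc_self)
      (ae_restrict_of_forall_mem measurableSet_Ioo hf0)]

theorem rpow_sub_one_mul_sq_eq {p γ x y : ℝ} (hp : 2 < p) (hpγ : (p - 2) * (γ - 2) = 4)
    (hx : 0 ≤ x) (hy : 0 ≤ y) :
    (y ^ (p - 1) * x) ^ 2 = (y ^ 2 * x ^ (γ - 2)) ^ ((p - 2) / 2) * y ^ p := by
  rw [Real.mul_rpow (by positivity) (by positivity), ← Real.rpow_two y,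
    ← Real.rpow_mul hy, ← Real.rpow_mul hx, mul_div_cancel₀ _ two_ne_zero,
    show (γ - 2) * ((p - 2) / 2) = 2 by linear_combination hpγ / 2, mul_pow, Real.rpow_two x,
    ← Real.rpow_natCast, ← Real.rpow_mul hy, mul_right_comm,
    ← Real.rpow_add' hy (by linarith)]
  ring_nf

theorem sq_intervalIntegral_le_mul_integral_inv {a b : ℝ} {g w : ℝ → ℝ} (hab : a ≤ b)
    (hg : ContinuousOn g (Icc a b)) (hw : ContinuousOn w (Icc a b))
    (hw0 : ∀ x ∈ Icc a b, 0 < w x) :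
    (∫ x in a..b, g x) ^ 2 ≤ (∫ x in a..b, g x ^ 2 * w x) * ∫ x in a..b, (w x)⁻¹ := by
  have key := sq_intervalIntegral_mul_mul_le hab hg (hw.inv₀ fun x hx ↦ (hw0 x hx).ne') hw
    fun x hx ↦ (hw0 x hx).le
  have hne : ∀ x ∈ uIcc a b, w x ≠ 0 := fun x hx ↦ (hw0 x (uIcc_of_le hab ▸ hx)).ne'
  rwa [intervalIntegral.integral_congr (f := fun x ↦ g x * w⁻¹ x * w x) (g := g)
      fun x hx ↦ by simp [hne x hx],
    intervalIntegral.integral_congr (f := fun x ↦ w⁻¹ x ^ 2 * w x) (g := fun x ↦ (w x)⁻¹)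
      fun x hx ↦ by
      simp only [Pi.inv_apply]
      field_simp [hne x hx]] at key

section WeightedSobolev

variable {γ p b : ℝ} {h g : ℝ → ℝ}

theorem sq_mul_rpow_le_of_eq_zero (hγ : 2 < γ) (hhc : ContinuousOn h (Icc 0 b))
    (hgc : ContinuousOn g (Icc 0 b)) (hderiv : ∀ x ∈ Ioo 0 b, HasDerivAt h (g x) x)
    (hhb : h b = 0) {s : ℝ} (hs : s ∈ Icc 0 b) :
    h s ^ 2 * s ^ (γ - 2) ≤ (∫ x in 0..b, g x ^ 2 * x ^ (γ - 1)) / (γ - 2) := by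
  have hweight : ∀ x ∈ Icc 0 b, 0 ≤ g x ^ 2 * x ^ (γ - 1) := fun x hx ↦
    mul_nonneg (sq_nonneg _) (Real.rpow_nonneg hx.1 _)
  have hD : 0 ≤ ∫ x in 0..b, g x ^ 2 * x ^ (γ - 1) :=
    intervalIntegral.integral_nonneg (hs.1.trans hs.2) hweight
  obtain rfl | hs0 := hs.1.eq_or_lt
  · rw [Real.zero_rpow (by linarith), mul_zero]
    exact div_nonneg hD (by linarith)
  have hsub : Icc s b ⊆ Icc 0 b := Icc_subset_Icc_left hs0.le
  have ftc : ∫ x in s..b, g x = -h s := by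
    rw [intervalIntegral.integral_eq_sub_of_hasDerivAt_of_le hs.2 (hhc.mono hsub)
      (fun x hx ↦ hderiv x ⟨hs0.trans hx.1, hx.2⟩)
      ((hgc.mono hsub).intervalIntegrable_of_Icc hs.2), hhb, zero_sub]
  have cauchySchwarz := sq_intervalIntegral_le_mul_integral_inv hs.2 (hgc.mono hsub)
    (continuousOn_id.rpow_const fun x hx ↦ Or.inl (hs0.trans_le hx.1).ne')
    fun x hx ↦ Real.rpow_pos_of_pos (hs0.trans_le hx.1) (γ - 1)
  rw [ftc, neg_sq, intervalIntegral.integral_congr fun x hx ↦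
    (Real.rpow_neg (hs0.le.trans (uIcc_of_le hs.2 ▸ hx).1) (γ - 1)).symm] at cauchySchwarz
  have energy : ∫ x in s..b, g x ^ 2 * x ^ (γ - 1) ≤ ∫ x in 0..b, g x ^ 2 * x ^ (γ - 1) :=
    intervalIntegral.integral_mono_interval hs0.le hs.2 le_rfl
      (ae_restrict_of_forall_mem measurableSet_Ioc fun x hx ↦
        hweight x (Ioc_subset_Icc_self hx))
      (ContinuousOn.intervalIntegrable_of_Icc (hs.1.trans hs.2)
        ((hgc.pow 2).mul (continuousOn_id.rpow_const fun x _ ↦ Or.inr (by linarith))))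
  have tail := intervalIntegral_rpow_le_of_lt_neg_one (q := -(γ - 1)) (by linarith) hs0 hs.2
  rw [show -(γ - 1) + 1 = -(γ - 2) by ring, div_neg, neg_div, neg_neg] at tail
  calc h s ^ 2 * s ^ (γ - 2)
        ≤ (∫ x in 0..b, g x ^ 2 * x ^ (γ - 1)) * (s ^ (-(γ - 2)) / (γ - 2)) *
          s ^ (γ - 2) := by
        gcongr
        exact cauchySchwarz.trans (mul_le_mul energy tail (intervalIntegral.integral_nonneg hs.2
          fun x hx ↦ Real.rpow_nonneg (hs0.le.trans hx.1) _) hD)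
    _ = (∫ x in 0..b, g x ^ 2 * x ^ (γ - 1)) / (γ - 2) := by
        rw [Real.rpow_neg hs0.le]
        field_simp [(Real.rpow_pos_of_pos hs0 (γ - 2)).ne']

theorem mul_intervalIntegral_rpow_mul_rpow_eq (hγ : 1 ≤ γ) (hp : 1 ≤ p) (hb : 0 ≤ b)
    (hhc : ContinuousOn h (Icc 0 b)) (hgc : ContinuousOn g (Icc 0 b))
    (hderiv : ∀ x ∈ Ioo 0 b, HasDerivAt h (g x) x) (hhb : h b = 0) :
    γ * ∫ x in 0..b, h x ^ p * x ^ (γ - 1) =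
      -(p * ∫ x in 0..b, g x * h x ^ (p - 1) * x ^ γ) := by
  have hpow : ∀ q : ℝ, 0 ≤ q → ContinuousOn (fun x : ℝ ↦ x ^ q) (Icc 0 b) :=
    fun q hq ↦ continuousOn_id.rpow_const fun _ _ ↦ Or.inr hq
  have hhpow : ∀ q : ℝ, 0 ≤ q → ContinuousOn (fun x ↦ h x ^ q) (Icc 0 b) := fun q hq ↦
    hhc.rpow_const fun _ _ ↦ Or.inr hq
  rw [← uIcc_of_le hb] at hpow hhpow hgc
  have parts := intervalIntegral.integral_mul_deriv_eq_deriv_mul_of_hasDerivAt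
    (u' := fun x ↦ g x * p * h x ^ (p - 1)) (v' := fun x ↦ γ * x ^ (γ - 1))
    (hhpow p (by linarith)) (hpow γ (by linarith))
    (fun x hx ↦ (hderiv x (by simpa [hb] using hx)).rpow_const (Or.inr hp))
    (fun x hx ↦ Real.hasDerivAt_rpow_const
      (Or.inl (show x ∈ Ioo 0 b by simpa [hb] using hx).1.ne'))
    ((hgc.mul continuousOn_const).mul (hhpow _ (by linarith))).intervalIntegrable
    (continuousOn_const.mul (hpow _ (by linarith))).intervalIntegrable
  rw [hhb, Real.zero_rpow (by linarith), Real.zero_rpow (by linarith), zero_mul, mul_zero,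
    sub_zero, zero_sub] at parts
  calc γ * ∫ x in 0..b, h x ^ p * x ^ (γ - 1)
        = ∫ x in 0..b, h x ^ p * (γ * x ^ (γ - 1)) := by
        rw [← intervalIntegral.integral_const_mul]
        congr 1 with x
        ring
    _ = -∫ x in 0..b, g x * p * h x ^ (p - 1) * x ^ γ := parts
    _ = -(p * ∫ x in 0..b, g x * h x ^ (p - 1) * x ^ γ) := by
        rw [← intervalIntegral.integral_const_mul]
        congr 2 with x
        ring

theorem sq_mul_intervalIntegral_rpow_mul_rpow_le (hγ : 2 < γ) (hpγ : (p - 2) * (γ - 2) = 4)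
    (hb : 0 ≤ b) (hhc : ContinuousOn h (Icc 0 b)) (hgc : ContinuousOn g (Icc 0 b))
    (hderiv : ∀ x ∈ Ioo 0 b, HasDerivAt h (g x) x) (hhb : h b = 0)
    (hh0 : ∀ x ∈ Icc 0 b, 0 ≤ h x) :
    (γ * ∫ x in 0..b, h x ^ p * x ^ (γ - 1)) ^ 2 ≤
      p ^ 2 * (∫ x in 0..b, g x ^ 2 * x ^ (γ - 1)) *
        (((∫ x in 0..b, g x ^ 2 * x ^ (γ - 1)) / (γ - 2)) ^ ((p - 2) / 2) *
          ∫ x in 0..b, h x ^ p * x ^ (γ - 1)) := by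
  have hp : 2 < p := by nlinarith
  have hweight : ContinuousOn (fun x : ℝ ↦ x ^ (γ - 1)) (Icc 0 b) :=
    continuousOn_id.rpow_const fun _ _ ↦ Or.inr (by linarith)
  have hfactor : ContinuousOn (fun x ↦ h x ^ (p - 1) * x) (Icc 0 b) :=
    (hhc.rpow_const fun _ _ ↦ Or.inr (by linarith)).mul continuousOn_id
  have hX : ContinuousOn (fun x ↦ h x ^ p * x ^ (γ - 1)) (Icc 0 b) :=
    (hhc.rpow_const fun _ _ ↦ Or.inr (by linarith)).mul hweight
  have ibp := mul_intervalIntegral_rpow_mul_rpow_eq (γ := γ) (p := p) (by linarith)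
    (by linarith) hb hhc hgc hderiv hhb
  rw [intervalIntegral.integral_congr (f := fun x ↦ g x * h x ^ (p - 1) * x ^ γ)
    (g := fun x ↦ g x * (h x ^ (p - 1) * x) * x ^ (γ - 1)) fun x hx ↦ by
      have hx0 : 0 ≤ x := (uIcc_of_le hb ▸ hx).1
      dsimp only
      rw [← sub_add_cancel γ 1, Real.rpow_add_one' hx0 (by linarith), add_sub_cancel_right]
      ring] at ibp
  have decay : ∫ x in 0..b, (h x ^ (p - 1) * x) ^ 2 * x ^ (γ - 1) ≤
      ((∫ x in 0..b, g x ^ 2 * x ^ (γ - 1)) / (γ - 2)) ^ ((p - 2) / 2) *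
        ∫ x in 0..b, h x ^ p * x ^ (γ - 1) := by
    rw [← intervalIntegral.integral_const_mul]
    refine intervalIntegral.integral_mono_on hb
      (((hfactor.pow 2).mul hweight).intervalIntegrable_of_Icc hb)
      ((continuousOn_const.mul hX).intervalIntegrable_of_Icc hb) fun x hx ↦ ?_
    rw [rpow_sub_one_mul_sq_eq hp hpγ hx.1 (hh0 x hx), mul_assoc]
    gcongr
    · exact mul_nonneg (Real.rpow_nonneg (hh0 x hx) _) (Real.rpow_nonneg hx.1 _)
    · exact mul_nonneg (sq_nonneg _) (Real.rpow_nonneg hx.1 _)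
    · exact sq_mul_rpow_le_of_eq_zero hγ hhc hgc hderiv hhb hx
  calc (γ * ∫ x in 0..b, h x ^ p * x ^ (γ - 1)) ^ 2
      = p ^ 2 * (∫ x in 0..b, g x * (h x ^ (p - 1) * x) * x ^ (γ - 1)) ^ 2 := by
        rw [ibp]
        ring
    _ ≤ _ := by
        rw [mul_assoc]
        gcongr
        exact (sq_intervalIntegral_mul_mul_le hb hgc hfactor hweight
          fun x hx ↦ Real.rpow_nonneg hx.1 _).trans (mul_le_mul_of_nonneg_left decay
            (intervalIntegral.integral_nonneg hb fun x hx ↦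
              mul_nonneg (sq_nonneg _) (Real.rpow_nonneg hx.1 _)))

theorem intervalIntegral_rpow_mul_rpow_le (hγ : 2 < γ) (hpγ : (p - 2) * (γ - 2) = 4)
    (hb : 0 ≤ b) (hhc : ContinuousOn h (Icc 0 b)) (hgc : ContinuousOn g (Icc 0 b))
    (hderiv : ∀ x ∈ Ioo 0 b, HasDerivAt h (g x) x) (hhb : h b = 0)
    (hh0 : ∀ x ∈ Icc 0 b, 0 ≤ h x) :
    ∫ x in 0..b, h x ^ p * x ^ (γ - 1) ≤
      (p / γ) ^ 2 / (γ - 2) ^ ((p - 2) / 2) *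
        (∫ x in 0..b, g x ^ 2 * x ^ (γ - 1)) ^ (p / 2) := by
  have hp : 2 < p := by nlinarith
  have key := sq_mul_intervalIntegral_rpow_mul_rpow_le hγ hpγ hb hhc hgc hderiv hhb hh0
  set X := ∫ x in 0..b, h x ^ p * x ^ (γ - 1)
  set D := ∫ x in 0..b, g x ^ 2 * x ^ (γ - 1)
  have hX0 : 0 ≤ X := intervalIntegral.integral_nonneg hb fun x hx ↦
    mul_nonneg (Real.rpow_nonneg (hh0 x hx) _) (Real.rpow_nonneg hx.1 _)
  have hD0 : 0 ≤ D := intervalIntegral.integral_nonneg hb fun x hx ↦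
    mul_nonneg (sq_nonneg _) (Real.rpow_nonneg hx.1 _)
  have hc : 0 ≤ (p / γ) ^ 2 * D * (D / (γ - 2)) ^ ((p - 2) / 2) :=
    mul_nonneg (mul_nonneg (sq_nonneg _) hD0) (Real.rpow_nonneg (div_nonneg hD0 (by linarith)) _)
  have hXX :
      γ ^ 2 * (X * X) ≤ γ ^ 2 * ((p / γ) ^ 2 * D * (D / (γ - 2)) ^ ((p - 2) / 2) * X) := by
    convert key using 1
    · ring
    · field_simp
  calc X ≤ (p / γ) ^ 2 * D * (D / (γ - 2)) ^ ((p - 2) / 2) := by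
        obtain hX | hX := hX0.eq_or_lt
        · exact hX ▸ hc
        · exact le_of_mul_le_mul_right (le_of_mul_le_mul_left hXX (by positivity)) hX
    _ = (p / γ) ^ 2 / (γ - 2) ^ ((p - 2) / 2) * D ^ (p / 2) := by
        rw [Real.div_rpow hD0 (by linarith), show p / 2 = 1 + (p - 2) / 2 by ring,
          Real.rpow_one_add' hD0 (by linarith)]
        ring

theorem lintegral_rpow_mul_rpow_le_of_contDiffOn (hγ : 2 < γ) (hpγ : (p - 2) * (γ - 2) = 4)
    (hb : 0 < b) (hh : ContDiffOn ℝ 1 h (Icc 0 b)) (hh0 : ∀ x ∈ Icc 0 b, 0 ≤ h x)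
    (hhb : h b = 0) :
    (∫⁻ x in Ioo 0 b, ENNReal.ofReal (h x ^ p * x ^ (γ - 1))) ^ (1 / p) ≤
      ENNReal.ofReal (((p / γ) ^ 2 / (γ - 2) ^ ((p - 2) / 2)) ^ (1 / p)) *
        (∫⁻ x in Ioo 0 b, ENNReal.ofReal (derivWithin h (Icc 0 b) x ^ 2 * x ^ (γ - 1)))
          ^ ((1 : ℝ) / 2) := by
  have hp : 2 < p := by nlinarith
  have hhc := hh.continuousOn
  have hgc := hh.continuousOn_derivWithin (uniqueDiffOn_Icc hb) le_rfl
  have hderiv : ∀ x ∈ Ioo 0 b, HasDerivAt h (derivWithin h (Icc 0 b) x) x := fun x hx ↦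
    (hh.differentiableOn one_ne_zero x (Ioo_subset_Icc_self hx)).hasDerivWithinAt.hasDerivAt
      (Icc_mem_nhds hx.1 hx.2)
  have hweight : ContinuousOn (fun x : ℝ ↦ x ^ (γ - 1)) (Icc 0 b) :=
    continuousOn_id.rpow_const fun _ _ ↦ Or.inr (by linarith)
  have hX0 : ∀ x ∈ Icc 0 b, 0 ≤ h x ^ p * x ^ (γ - 1) := fun x hx ↦
    mul_nonneg (Real.rpow_nonneg (hh0 x hx) _) (Real.rpow_nonneg hx.1 _)
  have hD0 : ∀ x ∈ Icc 0 b, 0 ≤ derivWithin h (Icc 0 b) x ^ 2 * x ^ (γ - 1) := fun x hx ↦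
    mul_nonneg (sq_nonneg _) (Real.rpow_nonneg hx.1 _)
  rw [lintegral_Ioo_ofReal_eq_ofReal_intervalIntegral (f := fun x ↦ h x ^ p * x ^ (γ - 1))
      hb.le ((hhc.rpow_const fun _ _ ↦ Or.inr (by linarith)).mul hweight)
      fun x hx ↦ hX0 x (Ioo_subset_Icc_self hx),
    lintegral_Ioo_ofReal_eq_ofReal_intervalIntegral
      (f := fun x ↦ derivWithin h (Icc 0 b) x ^ 2 * x ^ (γ - 1)) hb.le ((hgc.pow 2).mul hweight)
      fun x hx ↦ hD0 x (Ioo_subset_Icc_self hx),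
    ENNReal.ofReal_rpow_of_nonneg (intervalIntegral.integral_nonneg hb.le hX0) (by positivity),
    ENNReal.ofReal_rpow_of_nonneg (intervalIntegral.integral_nonneg hb.le hD0) (by norm_num),
    ← ENNReal.ofReal_mul (by positivity)]
  refine ENNReal.ofReal_le_ofReal ((Real.rpow_le_rpow
    (intervalIntegral.integral_nonneg hb.le hX0)
    (intervalIntegral_rpow_mul_rpow_le hγ hpγ hb.le hhc hgc hderiv hhb hh0)
    (by positivity)).trans_eq ?_)
  rw [Real.mul_rpow (by positivity)
      (Real.rpow_nonneg (intervalIntegral.integral_nonneg hb.le hD0) _),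
    ← Real.rpow_mul (intervalIntegral.integral_nonneg hb.le hD0)]
  field_simp

end WeightedSobolev

theorem sub_two_mul_sub_two_eq_four {γ p : ℝ} (hγ : 2 < γ) (hp : 1 / p = 1 / 2 - 1 / γ) :
    (p - 2) * (γ - 2) = 4 := by
  have hp0 : p ≠ 0 := by
    rintro rfl
    rw [div_zero, eq_comm, sub_eq_zero, one_div, one_div, inv_inj] at hp
    linarith
  field_simp at hp
  linear_combination -hp

theorem stmt_1_general (N : ℕ) (α : ℝ) (hαN : α < N)
    (γ p : ℝ) (hγ : γ = 2 * N + 2 - 2 * α) (hp : 1 / p = 1 / 2 - 1 / γ) :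
    ∃ M₀ > (0 : ℝ), ∀ r > (0 : ℝ), ∀ h : ℝ → ℝ,
      ContDiffOn ℝ 1 h (Icc 0 (2 * r)) →
      (∀ s ∈ Icc (0 : ℝ) (2 * r), 0 ≤ h s) →
      h (2 * r) = 0 →
      (∫⁻ s in Ioo (0 : ℝ) (2 * r), ENNReal.ofReal (h s ^ p * s ^ (γ - 1))) ^ (1 / p)
        ≤ ENNReal.ofReal M₀ *
          (∫⁻ s in Ioo (0 : ℝ) (2 * r),
              ENNReal.ofReal ((derivWithin h (Icc 0 (2 * r)) s) ^ 2 * s ^ (γ - 1)))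
            ^ ((1 : ℝ) / 2) := by
  have hγ2 : 2 < γ := by rw [hγ]; linarith
  have hpγ := sub_two_mul_sub_two_eq_four hγ2 hp
  have hp2 : 2 < p := by nlinarith
  have hC : 0 < (p / γ) ^ 2 / (γ - 2) ^ ((p - 2) / 2) :=
    div_pos (by positivity) (Real.rpow_pos_of_pos (by linarith) _)
  refine ⟨_, Real.rpow_pos_of_pos hC (1 / p), fun r hr h hh hh0 hhb ↦ ?_⟩
  exact lintegral_rpow_mul_rpow_le_of_contDiffOn hγ2 hpγ (by positivity) hh hh0 hhb

theorem stmt_1 (N : ℕ) (hN : 1 ≤ N) (α : ℝ) (hα0 : 0 ≤ α) (hαN : α < N)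
    (γ p : ℝ) (hγ : γ = 2 * N + 2 - 2 * α) (hp : 1 / p = 1 / 2 - 1 / γ) :
    ∃ M₀ > (0 : ℝ), ∀ r > (0 : ℝ), ∀ h : ℝ → ℝ,
      ContDiffOn ℝ 1 h (Icc 0 (2 * r)) →
      (∀ s ∈ Icc (0 : ℝ) (2 * r), 0 ≤ h s) →
      h (2 * r) = 0 →
      (∫⁻ s in Ioo (0 : ℝ) (2 * r), ENNReal.ofReal (h s ^ p * s ^ (γ - 1))) ^ (1 / p)
        ≤ ENNReal.ofReal M₀ *
          (∫⁻ s in Ioo (0 : ℝ) (2 * r),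
              ENNReal.ofReal ((derivWithin h (Icc 0 (2 * r)) s) ^ 2 * s ^ (γ - 1)))
            ^ ((1 : ℝ) / 2) :=
  stmt_1_general N α hαN γ p hγ hp
end

section
/- Let α ∈ ℝ. For every w = (z,l) ∈ ℝ^{2N+1} with w ≠ 0, the function d^{−α}(w) = (|z|⁴+l²)^{−α/4} satisfies −Δ_H(d^{−α})(w) = α(2N−α) · d(w)^{−α} · |z|²/(|z|⁴ + l²). -/
open MeasureTheory Set Real

noncomputable section

/-- The Heisenberg group `ℍ^N = ℝ^N × ℝ^N × ℝ`, with points `w = (x, y, l)`, `z = (x, y)`. -/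
abbrev H (N : ℕ) : Type := (Fin N → ℝ) × (Fin N → ℝ) × ℝ

/-- The coefficient vector at `w` of the vector field `X_j = ∂_{x_j} + 2 y_j ∂_l`. -/
def Xvec (N : ℕ) (j : Fin N) (w : H N) : H N := (Pi.single j 1, 0, 2 * w.2.1 j)

/-- The coefficient vector at `w` of the vector field `Y_j = ∂_{y_j} - 2 x_j ∂_l`. -/
def Yvec (N : ℕ) (j : Fin N) (w : H N) : H N := (0, Pi.single j 1, -2 * w.1 j)

/-- `X_j f`, as a directional derivative. -/
def Xop (N : ℕ) (j : Fin N) (f : H N → ℝ) (w : H N) : ℝ := fderiv ℝ f w (Xvec N j w)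

/-- `Y_j f`, as a directional derivative. -/
def Yop (N : ℕ) (j : Fin N) (f : H N → ℝ) (w : H N) : ℝ := fderiv ℝ f w (Yvec N j w)

/-- The squared horizontal gradient `|∇_H f|² = Σ_j ((X_j f)² + (Y_j f)²)`. -/
def gradHsq (N : ℕ) (f : H N → ℝ) (w : H N) : ℝ :=
  ∑ j, (Xop N j f w) ^ 2 + ∑ j, (Yop N j f w) ^ 2

/-- The sub-Laplacian `Δ_H f = Σ_j (X_j(X_j f) + Y_j(Y_j f))`. -/
def subLap (N : ℕ) (f : H N → ℝ) (w : H N) : ℝ :=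
  ∑ j, Xop N j (Xop N j f) w + ∑ j, Yop N j (Yop N j f) w

/-- `|z|²` for `w = (z, l) = (x, y, l)`. -/
def zsq (N : ℕ) (w : H N) : ℝ := ∑ j, (w.1 j) ^ 2 + ∑ j, (w.2.1 j) ^ 2

/-- The Korányi gauge `d(w) = (|z|⁴ + l²)^{1/4}`. -/
def dgauge (N : ℕ) (w : H N) : ℝ := ((zsq N w) ^ 2 + (w.2.2) ^ 2) ^ ((1 : ℝ) / 4)

/-!
Write `ρ = d⁴ = |z|⁴ + l²`, a polynomial, so that `d^{-α} = ρ^c` with `c = -α/4`.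
Derivatives along a vector field obey the Leibniz and chain rules, so for any positive `ρ`
`Δ_H ρ^c = c (c - 1) ρ^{c-2} |∇_H ρ|² + c ρ^{c-1} Δ_H ρ`.
For the gauge, `X_j ρ = 4 (|z|² x_j + l y_j)` and `Y_j ρ = 4 (|z|² y_j - l x_j)`; hence
`|∇_H ρ|² = 16 |z|² ρ` and `Δ_H ρ = 8 (N + 2) |z|²`, and the two terms combine to
`Δ_H ρ^c = 8 c (2c + N) |z|² ρ^{c-1} = -α (2N - α) |z|² ρ^c / ρ`.
-/

open Filter Topology

section DerivAlong

variable {E : Type*} [NormedAddCommGroup E] [NormedSpace ℝ E]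

def derivAlong (V : E → E) (f : E → ℝ) (w : E) : ℝ := fderiv ℝ f w (V w)

variable {V : E → E} {f h : E → ℝ} {w : E}

lemma derivAlong_congr (hfh : f =ᶠ[𝓝 w] h) : derivAlong V f w = derivAlong V h w := by
  rw [derivAlong, derivAlong, hfh.fderiv_eq]

lemma HasFDerivAt.derivAlong_eq {f' : E →L[ℝ] ℝ} (hf : HasFDerivAt f f' w) :
    derivAlong V f w = f' (V w) := by
  rw [derivAlong, hf.fderiv]

lemma derivAlong_clm (ℓ : E →L[ℝ] ℝ) : derivAlong V ℓ w = ℓ (V w) :=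
  ℓ.hasFDerivAt.derivAlong_eq

lemma derivAlong_sum {ι : Type*} (s : Finset ι) {F : ι → E → ℝ}
    (hF : ∀ i ∈ s, DifferentiableAt ℝ (F i) w) :
    derivAlong V (fun v => ∑ i ∈ s, F i v) w = ∑ i ∈ s, derivAlong V (F i) w := by
  simp [derivAlong, fderiv_fun_sum hF]

lemma derivAlong_add (hf : DifferentiableAt ℝ f w) (hh : DifferentiableAt ℝ h w) :
    derivAlong V (fun v => f v + h v) w = derivAlong V f w + derivAlong V h w := by
  simp [derivAlong, fderiv_fun_add hf hh]

lemma derivAlong_sub (hf : DifferentiableAt ℝ f w) (hh : DifferentiableAt ℝ h w) :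
    derivAlong V (fun v => f v - h v) w = derivAlong V f w - derivAlong V h w := by
  simp [derivAlong, fderiv_fun_sub hf hh]

lemma derivAlong_mul (hf : DifferentiableAt ℝ f w) (hh : DifferentiableAt ℝ h w) :
    derivAlong V (fun v => f v * h v) w = f w * derivAlong V h w + h w * derivAlong V f w := by
  simp [derivAlong, fderiv_fun_mul hf hh]

lemma derivAlong_const_mul (c : ℝ) (hf : DifferentiableAt ℝ f w) :
    derivAlong V (fun v => c * f v) w = c * derivAlong V f w := by
  simp [derivAlong, fderiv_const_mul hf]

lemma derivAlong_pow (n : ℕ) (hf : DifferentiableAt ℝ f w) :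
    derivAlong V (fun v => f v ^ n) w = n * f w ^ (n - 1) * derivAlong V f w := by
  simp [derivAlong, fderiv_fun_pow n hf]

lemma derivAlong_rpow_const (c : ℝ) (hf : DifferentiableAt ℝ f w) (hfw : f w ≠ 0) :
    derivAlong V (fun v => f v ^ c) w = c * f w ^ (c - 1) * derivAlong V f w := by
  rw [(hf.hasFDerivAt.rpow_const (Or.inl hfw)).derivAlong_eq, derivAlong]
  simp [mul_assoc]

lemma derivAlong_derivAlong_rpow_const (c : ℝ) (hf : ∀ᶠ v in 𝓝 w, DifferentiableAt ℝ f v)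
    (hfw : 0 < f w) (hVf : DifferentiableAt ℝ (derivAlong V f) w) :
    derivAlong V (derivAlong V fun v => f v ^ c) w
      = c * (c - 1) * f w ^ (c - 2) * derivAlong V f w ^ 2
        + c * f w ^ (c - 1) * derivAlong V (derivAlong V f) w := by
  have hfw' : DifferentiableAt ℝ f w := hf.self_of_nhds
  have hpos : ∀ᶠ v in 𝓝 w, 0 < f v := hfw'.continuousAt.eventually (lt_mem_nhds hfw)
  have hfirst : derivAlong V (fun v => f v ^ c)
      =ᶠ[𝓝 w] fun v => c * f v ^ (c - 1) * derivAlong V f v := by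
    filter_upwards [hf, hpos] with v hv hv' using derivAlong_rpow_const c hv hv'.ne'
  have hpow : DifferentiableAt ℝ (fun v => f v ^ (c - 1)) w := hfw'.rpow_const (Or.inl hfw.ne')
  rw [derivAlong_congr hfirst, derivAlong_mul (hpow.const_mul c) hVf,
    derivAlong_const_mul c hpow, derivAlong_rpow_const _ hfw' hfw.ne',
    show c - 1 - 1 = c - 2 by ring]
  ring

end DerivAlong

namespace Heisenberg

variable {N : ℕ}

lemma derivAlong_fst_apply (V : H N → H N) (j : Fin N) (w : H N) :
    derivAlong V (fun v => v.1 j) w = (V w).1 j :=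
  derivAlong_clm (V := V) (w := w)
    ((ContinuousLinearMap.proj j).comp (ContinuousLinearMap.fst ℝ _ _))

lemma derivAlong_snd_fst_apply (V : H N → H N) (j : Fin N) (w : H N) :
    derivAlong V (fun v => v.2.1 j) w = (V w).2.1 j :=
  derivAlong_clm (V := V) (w := w) ((ContinuousLinearMap.proj j).comp
    ((ContinuousLinearMap.fst ℝ _ _).comp (ContinuousLinearMap.snd ℝ _ _)))

lemma derivAlong_snd_snd (V : H N → H N) (w : H N) :
    derivAlong V (fun v => v.2.2) w = (V w).2.2 :=
  derivAlong_clm (V := V) (w := w)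
    ((ContinuousLinearMap.snd ℝ _ _).comp (ContinuousLinearMap.snd ℝ _ _))

lemma Xop_eq_derivAlong (j : Fin N) (f : H N → ℝ) : Xop N j f = derivAlong (Xvec N j) f := rfl

lemma Yop_eq_derivAlong (j : Fin N) (f : H N → ℝ) : Yop N j f = derivAlong (Yvec N j) f := rfl

lemma subLap_rpow_const (c : ℝ) {f : H N → ℝ} {w : H N}
    (hf : ∀ᶠ v in 𝓝 w, DifferentiableAt ℝ f v) (hfw : 0 < f w)
    (hX : ∀ j, DifferentiableAt ℝ (Xop N j f) w)
    (hY : ∀ j, DifferentiableAt ℝ (Yop N j f) w) :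
    subLap N (fun v => f v ^ c) w
      = c * (c - 1) * f w ^ (c - 2) * gradHsq N f w + c * f w ^ (c - 1) * subLap N f w := by
  have hXX (j : Fin N) := derivAlong_derivAlong_rpow_const c hf hfw (hX j)
  have hYY (j : Fin N) := derivAlong_derivAlong_rpow_const c hf hfw (hY j)
  simp only [subLap, gradHsq, Xop_eq_derivAlong, Yop_eq_derivAlong, hXX, hYY,
    Finset.sum_add_distrib, ← Finset.mul_sum]
  ring

@[fun_prop]
lemma differentiable_zsq : Differentiable ℝ (zsq N) := by
  unfold zsq; fun_prop

lemma derivAlong_zsq (V : H N → H N) (w : H N) :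
    derivAlong V (zsq N) w
      = ∑ j, 2 * w.1 j * (V w).1 j + ∑ j, 2 * w.2.1 j * (V w).2.1 j := by
  unfold zsq
  rw [derivAlong_add (by fun_prop) (by fun_prop), derivAlong_sum _ (by fun_prop),
    derivAlong_sum _ (by fun_prop)]
  have hx (j : Fin N) : DifferentiableAt ℝ (fun v : H N => v.1 j) w := by fun_prop
  have hy (j : Fin N) : DifferentiableAt ℝ (fun v : H N => v.2.1 j) w := by fun_prop
  simp [derivAlong_pow 2 (hx _), derivAlong_pow 2 (hy _), derivAlong_fst_apply,
    derivAlong_snd_fst_apply]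

lemma derivAlong_Xvec_zsq (j : Fin N) (w : H N) :
    derivAlong (Xvec N j) (zsq N) w = 2 * w.1 j := by
  simp [derivAlong_zsq, Xvec, Pi.single_apply]

lemma derivAlong_Yvec_zsq (j : Fin N) (w : H N) :
    derivAlong (Yvec N j) (zsq N) w = 2 * w.2.1 j := by
  simp [derivAlong_zsq, Yvec, Pi.single_apply]

lemma zsq_eq_zero_iff (w : H N) : zsq N w = 0 ↔ w.1 = 0 ∧ w.2.1 = 0 := by
  have hsq (u : Fin N → ℝ) : 0 ≤ fun j => u j ^ 2 := fun j => sq_nonneg (u j)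
  rw [zsq, add_eq_zero_iff_of_nonneg (Fintype.sum_nonneg (hsq _)) (Fintype.sum_nonneg (hsq _)),
    Fintype.sum_eq_zero_iff_of_nonneg (hsq _), Fintype.sum_eq_zero_iff_of_nonneg (hsq _)]
  simp [funext_iff]

def quarticGauge (N : ℕ) (w : H N) : ℝ := zsq N w ^ 2 + w.2.2 ^ 2

lemma differentiable_quarticGauge : Differentiable ℝ (quarticGauge N) := by
  unfold quarticGauge; fun_prop

lemma quarticGauge_pos {w : H N} (hw : w ≠ 0) : 0 < quarticGauge N w := by
  have hne : zsq N w ≠ 0 ∨ w.2.2 ≠ 0 := by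
    by_contra! h
    obtain ⟨hx, hy⟩ := (zsq_eq_zero_iff w).mp h.1
    exact hw (Prod.ext hx (Prod.ext hy h.2))
  rw [quarticGauge]
  rcases hne with h | h <;> positivity

lemma dgauge_rpow (α : ℝ) (w : H N) : dgauge N w ^ (-α) = quarticGauge N w ^ (-α / 4) := by
  rw [dgauge, ← Real.rpow_mul (by positivity), ← quarticGauge]
  ring_nf

lemma Xop_quarticGauge (j : Fin N) :
    Xop N j (quarticGauge N) = fun w => 4 * (zsq N w * w.1 j + w.2.2 * w.2.1 j) := by
  ext w
  rw [Xop_eq_derivAlong]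
  unfold quarticGauge
  rw [derivAlong_add (by fun_prop) (by fun_prop),
    derivAlong_pow 2 (by fun_prop), derivAlong_pow 2 (by fun_prop), derivAlong_Xvec_zsq,
    derivAlong_snd_snd]
  simp only [Xvec]
  ring

lemma Yop_quarticGauge (j : Fin N) :
    Yop N j (quarticGauge N) = fun w => 4 * (zsq N w * w.2.1 j - w.2.2 * w.1 j) := by
  ext w
  rw [Yop_eq_derivAlong]
  unfold quarticGauge
  rw [derivAlong_add (by fun_prop) (by fun_prop),
    derivAlong_pow 2 (by fun_prop), derivAlong_pow 2 (by fun_prop), derivAlong_Yvec_zsq,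
    derivAlong_snd_snd]
  simp only [Yvec]
  ring

lemma Xop_Xop_quarticGauge (j : Fin N) (w : H N) :
    Xop N j (Xop N j (quarticGauge N)) w = 4 * (zsq N w + 2 * w.1 j ^ 2 + 2 * w.2.1 j ^ 2) := by
  rw [Xop_quarticGauge, Xop_eq_derivAlong, derivAlong_const_mul _ (by fun_prop),
    derivAlong_add (by fun_prop) (by fun_prop), derivAlong_mul (by fun_prop) (by fun_prop),
    derivAlong_mul (by fun_prop) (by fun_prop), derivAlong_Xvec_zsq,
    derivAlong_fst_apply, derivAlong_snd_fst_apply, derivAlong_snd_snd]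
  simp only [Xvec, Pi.single_eq_same, Pi.zero_apply]
  ring

lemma Yop_Yop_quarticGauge (j : Fin N) (w : H N) :
    Yop N j (Yop N j (quarticGauge N)) w = 4 * (zsq N w + 2 * w.1 j ^ 2 + 2 * w.2.1 j ^ 2) := by
  rw [Yop_quarticGauge, Yop_eq_derivAlong, derivAlong_const_mul _ (by fun_prop),
    derivAlong_sub (by fun_prop) (by fun_prop), derivAlong_mul (by fun_prop) (by fun_prop),
    derivAlong_mul (by fun_prop) (by fun_prop), derivAlong_Yvec_zsq,
    derivAlong_fst_apply, derivAlong_snd_fst_apply, derivAlong_snd_snd]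
  simp only [Yvec, Pi.single_eq_same, Pi.zero_apply]
  ring

lemma gradHsq_quarticGauge (w : H N) :
    gradHsq N (quarticGauge N) w = 16 * zsq N w * quarticGauge N w := by
  simp only [gradHsq, Xop_quarticGauge, Yop_quarticGauge, ← Finset.sum_add_distrib]
  have hterm (j : Fin N) : (4 * (zsq N w * w.1 j + w.2.2 * w.2.1 j)) ^ 2
      + (4 * (zsq N w * w.2.1 j - w.2.2 * w.1 j)) ^ 2
      = 16 * quarticGauge N w * (w.1 j ^ 2 + w.2.1 j ^ 2) := by
    rw [quarticGauge]; ring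
  rw [Finset.sum_congr rfl fun j _ => hterm j, ← Finset.mul_sum, Finset.sum_add_distrib, ← zsq]
  ring

lemma subLap_quarticGauge (w : H N) :
    subLap N (quarticGauge N) w = 8 * (N + 2) * zsq N w := by
  simp only [subLap, Xop_Xop_quarticGauge, Yop_Yop_quarticGauge, ← Finset.sum_add_distrib]
  have hterm (j : Fin N) : 4 * (zsq N w + 2 * w.1 j ^ 2 + 2 * w.2.1 j ^ 2)
      + 4 * (zsq N w + 2 * w.1 j ^ 2 + 2 * w.2.1 j ^ 2)
      = 8 * zsq N w + 16 * (w.1 j ^ 2 + w.2.1 j ^ 2) := by ring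
  rw [Finset.sum_congr rfl fun j _ => hterm j, Finset.sum_add_distrib, Finset.sum_const,
    ← Finset.mul_sum, Finset.sum_add_distrib, ← zsq, Finset.card_univ, Fintype.card_fin,
    nsmul_eq_mul]
  ring

end Heisenberg

open Heisenberg in
theorem stmt_7_general (N : ℕ) (α : ℝ) (w : H N) (hw : w ≠ 0) :
    -subLap N (fun v => dgauge N v ^ (-α)) w
      = α * (2 * (N : ℝ) - α) * dgauge N w ^ (-α) *
          (zsq N w / ((zsq N w) ^ 2 + (w.2.2) ^ 2)) := by
  have hρ : 0 < quarticGauge N w := quarticGauge_pos hw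
  have hX (j : Fin N) : DifferentiableAt ℝ (Xop N j (quarticGauge N)) w := by
    rw [Xop_quarticGauge]; fun_prop
  have hY (j : Fin N) : DifferentiableAt ℝ (Yop N j (quarticGauge N)) w := by
    rw [Yop_quarticGauge]; fun_prop
  simp only [dgauge_rpow]
  rw [subLap_rpow_const _ (.of_forall fun v => differentiable_quarticGauge v) hρ hX hY,
    gradHsq_quarticGauge, subLap_quarticGauge, ← quarticGauge,
    Real.rpow_sub hρ, Real.rpow_sub hρ, Real.rpow_two, Real.rpow_one]
  field_simp
  ring

theorem stmt_7 (N : ℕ) (hN : 1 ≤ N) (α : ℝ) (w : H N) (hw : w ≠ 0) :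
    -subLap N (fun v => dgauge N v ^ (-α)) w
      = α * (2 * (N : ℝ) - α) * dgauge N w ^ (-α) *
          (zsq N w / ((zsq N w) ^ 2 + (w.2.2) ^ 2)) :=
  stmt_7_general N α w hw
end
end

section
/- For every w = (z,l) ∈ ℝ^{2N+1} with w ≠ 0, the function d^{−2N}(w) = (|z|⁴+l²)^{−N/2} satisfies Δ_H(d^{−2N})(w) = 0; that is, d^{2−Q} with Q = 2N+2 is Δ_H-harmonic away from the origin. -/
open MeasureTheory Set Real

noncomputable section

/-!
Write `d^{-2N} = ρ^{-N/2}` with the polynomial `ρ = |z|⁴ + l²`. Since each `X_j`, `Y_j` is a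
derivation, `Δ_H (φ ∘ ρ) = φ''(ρ) |∇_H ρ|² + φ'(ρ) Δ_H ρ`. From `X_j ρ = 4(|z|² x_j + l y_j)` and
`Y_j ρ = 4(|z|² y_j - l x_j)` one gets `|∇_H ρ|² = 16 |z|² ρ` and `Δ_H ρ = 8(N + 2) |z|²`, so for
`φ = t^c` the sub-Laplacian is `c ρ^{c-1} |z|² (16 (c - 1) + 8 (N + 2))`, which vanishes for
`c = -N/2`.
-/
open Filter Topology

section AlongVectorField

variable {E : Type*} [NormedAddCommGroup E] [NormedSpace ℝ E]

theorem fderiv_fderiv_comp_along {V : E → E} {f : E → ℝ} {φ φ' : ℝ → ℝ} {φ'' : ℝ} {w : E}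
    (hV : DifferentiableAt ℝ V w) (hf : ContDiff ℝ 2 f)
    (hφ : ∀ᶠ t in 𝓝 (f w), HasDerivAt φ (φ' t) t) (hφ' : HasDerivAt φ' φ'' (f w)) :
    fderiv ℝ (fun u => fderiv ℝ (φ ∘ f) u (V u)) w (V w) =
      φ'' * fderiv ℝ f w (V w) ^ 2 + φ' (f w) * fderiv ℝ (fun u => fderiv ℝ f u (V u)) w (V w) := by
  have hf1 : Differentiable ℝ f := hf.differentiable (by norm_num)
  have hDf : DifferentiableAt ℝ (fun u => fderiv ℝ f u (V u)) w :=
    ((hf.fderiv_right (m := 1) (by norm_num)).differentiable one_ne_zero w).clm_apply hV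
  have hchain : (fun u => fderiv ℝ (φ ∘ f) u (V u)) =ᶠ[𝓝 w]
      fun u => φ' (f u) * fderiv ℝ f u (V u) := by
    filter_upwards [(hf1.continuous.tendsto w).eventually hφ] with u hu
    rw [(hu.comp_hasFDerivAt u (hf1 u).hasFDerivAt).fderiv]
    rfl
  have hprod : HasFDerivAt (fun u => φ' (f u) * fderiv ℝ f u (V u))
      (φ' (f w) • fderiv ℝ (fun u => fderiv ℝ f u (V u)) w +
        fderiv ℝ f w (V w) • φ'' • fderiv ℝ f w) w :=
    (hφ'.comp_hasFDerivAt w (hf1 w).hasFDerivAt).mul hDf.hasFDerivAt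
  rw [hchain.fderiv_eq, hprod.fderiv]
  simp only [add_apply, smul_apply, smul_eq_mul]
  ring

end AlongVectorField

theorem differentiable_Xvec (N : ℕ) (j : Fin N) : Differentiable ℝ (Xvec N j) := by
  unfold Xvec; fun_prop

theorem differentiable_Yvec (N : ℕ) (j : Fin N) : Differentiable ℝ (Yvec N j) := by
  unfold Yvec; fun_prop

section Composition

variable {N : ℕ} {f : H N → ℝ} {φ φ' : ℝ → ℝ} {φ'' : ℝ} {w : H N}

theorem Xop_Xop_comp (j : Fin N) (hf : ContDiff ℝ 2 f)
    (hφ : ∀ᶠ t in 𝓝 (f w), HasDerivAt φ (φ' t) t) (hφ' : HasDerivAt φ' φ'' (f w)) :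
    Xop N j (Xop N j (φ ∘ f)) w = φ'' * Xop N j f w ^ 2 + φ' (f w) * Xop N j (Xop N j f) w :=
  fderiv_fderiv_comp_along (differentiable_Xvec N j w) hf hφ hφ'

theorem Yop_Yop_comp (j : Fin N) (hf : ContDiff ℝ 2 f)
    (hφ : ∀ᶠ t in 𝓝 (f w), HasDerivAt φ (φ' t) t) (hφ' : HasDerivAt φ' φ'' (f w)) :
    Yop N j (Yop N j (φ ∘ f)) w = φ'' * Yop N j f w ^ 2 + φ' (f w) * Yop N j (Yop N j f) w :=
  fderiv_fderiv_comp_along (differentiable_Yvec N j w) hf hφ hφ'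

theorem subLap_comp (hf : ContDiff ℝ 2 f) (hφ : ∀ᶠ t in 𝓝 (f w), HasDerivAt φ (φ' t) t)
    (hφ' : HasDerivAt φ' φ'' (f w)) :
    subLap N (φ ∘ f) w = φ'' * gradHsq N f w + φ' (f w) * subLap N f w := by
  simp only [subLap, gradHsq, Xop_Xop_comp _ hf hφ hφ', Yop_Yop_comp _ hf hφ hφ',
    Finset.sum_add_distrib, ← Finset.mul_sum]
  ring

end Composition

theorem fderiv_zsq_apply (N : ℕ) (w v : H N) :
    fderiv ℝ (zsq N) w v = ∑ j, 2 * w.1 j * v.1 j + ∑ j, 2 * w.2.1 j * v.2.1 j := by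
  unfold zsq
  simp (disch := fun_prop) [fderiv_fun_add, fderiv_fun_sum, fderiv_fun_pow, fderiv_apply,
    fderiv.fst, fderiv.snd]

@[fun_prop]
theorem contDiff_zsq (N : ℕ) {n : WithTop ℕ∞} : ContDiff ℝ n (zsq N) := by
  unfold zsq; fun_prop

@[fun_prop]
theorem differentiable_zsq (N : ℕ) : Differentiable ℝ (zsq N) :=
  (contDiff_zsq N (n := 1)).differentiable one_ne_zero

def quarticGauge (N : ℕ) (w : H N) : ℝ := zsq N w ^ 2 + w.2.2 ^ 2

theorem contDiff_quarticGauge (N : ℕ) {n : WithTop ℕ∞} : ContDiff ℝ n (quarticGauge N) := by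
  unfold quarticGauge; fun_prop

theorem Xop_quarticGauge (N : ℕ) (j : Fin N) :
    Xop N j (quarticGauge N) = fun w => 4 * (zsq N w * w.1 j + w.2.2 * w.2.1 j) := by
  ext w
  unfold quarticGauge
  simp (disch := fun_prop) [Xop, Xvec, fderiv_fun_add, fderiv_fun_pow, fderiv.snd,
    fderiv_zsq_apply, Pi.single_apply]
  ring

theorem Yop_quarticGauge (N : ℕ) (j : Fin N) :
    Yop N j (quarticGauge N) = fun w => 4 * (zsq N w * w.2.1 j - w.2.2 * w.1 j) := by
  ext w
  unfold quarticGauge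
  simp (disch := fun_prop) [Yop, Yvec, fderiv_fun_add, fderiv_fun_pow, fderiv.snd,
    fderiv_zsq_apply, Pi.single_apply]
  ring

theorem Xop_Xop_quarticGauge (N : ℕ) (j : Fin N) (w : H N) :
    Xop N j (Xop N j (quarticGauge N)) w = 4 * (zsq N w + 2 * w.1 j ^ 2 + 2 * w.2.1 j ^ 2) := by
  rw [Xop_quarticGauge]
  simp (disch := fun_prop) [Xop, Xvec, fderiv_fun_add, fderiv_fun_mul, fderiv.fst, fderiv.snd,
    fderiv_apply, fderiv_zsq_apply, Pi.single_apply]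
  ring

theorem Yop_Yop_quarticGauge (N : ℕ) (j : Fin N) (w : H N) :
    Yop N j (Yop N j (quarticGauge N)) w = 4 * (zsq N w + 2 * w.1 j ^ 2 + 2 * w.2.1 j ^ 2) := by
  rw [Yop_quarticGauge]
  simp (disch := fun_prop) [Yop, Yvec, fderiv_fun_sub, fderiv_fun_mul, fderiv.fst, fderiv.snd,
    fderiv_apply, fderiv_zsq_apply, Pi.single_apply]
  ring

theorem zsq_eq_sum (N : ℕ) (w : H N) : zsq N w = ∑ j, (w.1 j ^ 2 + w.2.1 j ^ 2) :=
  (Finset.sum_add_distrib).symm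

theorem gradHsq_quarticGauge (N : ℕ) (w : H N) :
    gradHsq N (quarticGauge N) w = 16 * zsq N w * quarticGauge N w := by
  simp only [gradHsq, Xop_quarticGauge, Yop_quarticGauge, ← Finset.sum_add_distrib]
  rw [quarticGauge, zsq_eq_sum N w, Finset.mul_sum, Finset.sum_mul]
  congr 1 with j
  ring

theorem subLap_quarticGauge (N : ℕ) (w : H N) :
    subLap N (quarticGauge N) w = 8 * (N + 2) * zsq N w := by
  simp only [subLap, Xop_Xop_quarticGauge, Yop_Yop_quarticGauge, ← Finset.sum_add_distrib]
  have hterm : ∀ j, 4 * (zsq N w + 2 * w.1 j ^ 2 + 2 * w.2.1 j ^ 2) +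
      4 * (zsq N w + 2 * w.1 j ^ 2 + 2 * w.2.1 j ^ 2) =
      8 * zsq N w + 16 * (w.1 j ^ 2 + w.2.1 j ^ 2) := fun j => by ring
  rw [Finset.sum_congr rfl fun j _ => hterm j, Finset.sum_add_distrib, ← Finset.mul_sum,
    ← Finset.mul_sum, ← zsq_eq_sum, Finset.sum_const, Finset.card_univ, Fintype.card_fin,
    nsmul_eq_mul]
  ring

theorem quarticGauge_pos {N : ℕ} {w : H N} (hw : w ≠ 0) : 0 < quarticGauge N w := by
  have hz : 0 ≤ zsq N w := by rw [zsq_eq_sum]; positivity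
  obtain hz | hz := hz.lt_or_eq
  · unfold quarticGauge; positivity
  · have hl : w.2.2 ≠ 0 := by
      intro hl
      rw [zsq_eq_sum, eq_comm, Finset.sum_eq_zero_iff_of_nonneg fun _ _ => by positivity] at hz
      have hxy (j : Fin N) : w.1 j = 0 ∧ w.2.1 j = 0 := by
        have := hz j (Finset.mem_univ j)
        constructor <;> nlinarith [sq_nonneg (w.1 j), sq_nonneg (w.2.1 j)]
      exact hw (Prod.ext (funext fun j => (hxy j).1) (Prod.ext (funext fun j => (hxy j).2) hl))
    unfold quarticGauge; positivity

theorem stmt_8_general (N : ℕ) (w : H N) (hw : w ≠ 0) :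
    subLap N (fun v => dgauge N v ^ (-(2 * (N : ℝ)))) w = 0 := by
  set c : ℝ := -(N : ℝ) / 2 with hc
  set ρ := quarticGauge N w
  have hρ : 0 < ρ := quarticGauge_pos hw
  have hcomp : (fun v => dgauge N v ^ (-(2 * (N : ℝ)))) = (· ^ c) ∘ quarticGauge N := by
    ext v
    have hv : 0 ≤ quarticGauge N v := by unfold quarticGauge; positivity
    rw [Function.comp_apply, dgauge, ← quarticGauge, ← rpow_mul hv, hc]
    ring_nf
  have hφ : ∀ᶠ t in 𝓝 ρ, HasDerivAt (· ^ c) (c * t ^ (c - 1)) t :=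
    (eventually_gt_nhds hρ).mono fun t ht => hasDerivAt_rpow_const (Or.inl ht.ne')
  have hφ' : HasDerivAt (fun t => c * t ^ (c - 1)) (c * ((c - 1) * ρ ^ (c - 1 - 1))) ρ :=
    (hasDerivAt_rpow_const (Or.inl hρ.ne')).const_mul c
  rw [hcomp, subLap_comp (contDiff_quarticGauge N) hφ hφ', gradHsq_quarticGauge,
    subLap_quarticGauge]
  have hpow : ρ ^ (c - 1 - 1) * ρ = ρ ^ (c - 1) := by
    rw [rpow_sub_one hρ.ne', div_mul_cancel₀ _ hρ.ne']
  have hcancel : 16 * (c - 1) + 8 * ((N : ℝ) + 2) = 0 := by rw [hc]; ring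
  linear_combination (c * ρ ^ (c - 1) * zsq N w) * hcancel +
    (16 * c * (c - 1) * zsq N w) * hpow

theorem stmt_8 (N : ℕ) (hN : 1 ≤ N) (w : H N) (hw : w ≠ 0) :
    subLap N (fun v => dgauge N v ^ (-(2 * (N : ℝ)))) w = 0 :=
  stmt_8_general N w hw
end
end
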